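/- arXiv:1102.0862 — 3 statements merged into one kernel-verified Lean document; each statement's English description precedes it below -/
import Mathlib

section
/- Let α be a PBR on (X,Y) and β a PBR on (Y,Z). Then, with ∘ denoting usual composition of binary relations (η∘θ = {(x,z) : ∃y, (x,y) ∈ θ and (y,z) ∈ η}) and ρ^i the i-fold relational power of a binary relation ρ on Y (ρ^0 being the equality relation on Y), the components of the PBR composition β∘α are given by: (β∘α)₁₂ = ⋃_{i≥0} β₁₂∘(α₂₂∘β₁₁)^i∘α₁₂; (β∘α)₂₁ = ⋃_{i≥0} α₂₁∘(β₁₁∘α₂₂)^i∘β₂₁; (β∘α)₁₁ = α₁₁ ∪ ⋃_{i≥0} α₂₁∘(β₁₁∘α₂₂)^i∘β₁₁∘α₁₂; (β∘α)₂₂ = β₂₂ ∪ ⋃_{i≥0} β₁₂∘(α₂₂∘β₁₁)^i∘α₂₂∘β₂₁. -/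
/-!
Points of `X` meet only edges of `α` and points of `Z` only edges of `β`, so every interior
vertex of an `(α,β)`-connected sequence lies in `Y`. A sequence between points of `X ⊕ Z` is
therefore a single edge of `α₁₁` or `β₂₂`, or an entering edge (`α₁₂` or `β₂₁`), followed by a
stretch in `Y` alternating between `α₂₂` and `β₁₁`, followed by a leaving edge (`β₁₂` or `α₂₁`).
Grouped into consecutive pairs, such a stretch is a walk of `α₂₂∘β₁₁` or of `β₁₁∘α₂₂`, possibly
after one unpaired first step, and walks of a relation make up its reflexive-transitive
closure, the union of its powers.
-/

namespace PBRPaper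

/-- A partitioned binary relation (PBR) on `(X, Y)`: a binary relation on
the disjoint union `X ⊕ Y`. -/
abbrev PBR (X Y : Type) : Type := Set ((X ⊕ Y) × (X ⊕ Y))

variable {X Y Z : Type}

/-- The inclusion of `X ⊕ Y` into `X ⊕ Y ⊕ Z`. -/
def ι₁ : X ⊕ Y → X ⊕ Y ⊕ Z := Sum.elim Sum.inl fun y => Sum.inr (Sum.inl y)

/-- The inclusion of `Y ⊕ Z` into `X ⊕ Y ⊕ Z`. -/
def ι₂ : Y ⊕ Z → X ⊕ Y ⊕ Z :=
  Sum.elim (fun y => Sum.inr (Sum.inl y)) fun z => Sum.inr (Sum.inr z)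

/-- The inclusion of `X ⊕ Z` into `X ⊕ Y ⊕ Z`. -/
def ι₀ : X ⊕ Z → X ⊕ Y ⊕ Z := Sum.elim Sum.inl fun z => Sum.inr (Sum.inr z)

/-- Labeled edges in the ambient `X ⊕ Y ⊕ Z`: label `false` means
"an edge of `α`", label `true` means "an edge of `β`". -/
def EdgeMem (α : PBR X Y) (β : PBR Y Z)
    (e : Bool × (X ⊕ Y ⊕ Z) × (X ⊕ Y ⊕ Z)) : Prop :=
  if e.1 then ∃ p ∈ β, ι₂ p.1 = e.2.1 ∧ ι₂ p.2 = e.2.2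
  else ∃ p ∈ α, ι₁ p.1 = e.2.1 ∧ ι₁ p.2 = e.2.2

/-- An `(α,β)`-connected sequence: a nonempty list of labeled edges of `α`/`β`,
no two successive edges from the same PBR, endpoints matching up. -/
def IsConnSeq (α : PBR X Y) (β : PBR Y Z)
    (L : List (Bool × (X ⊕ Y ⊕ Z) × (X ⊕ Y ⊕ Z))) : Prop :=
  L ≠ [] ∧ (∀ e ∈ L, EdgeMem α β e) ∧
    L.Chain' fun e f => e.1 ≠ f.1 ∧ e.2.2 = f.2.1

/-- `L` is an `(α,β)`-connected sequence connecting `a` to `b`. -/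
def ConnectsVia (α : PBR X Y) (β : PBR Y Z)
    (L : List (Bool × (X ⊕ Y ⊕ Z) × (X ⊕ Y ⊕ Z))) (a b : X ⊕ Z) : Prop :=
  IsConnSeq α β L ∧ L.head?.map (fun e => e.2.1) = some (ι₀ a) ∧
    L.getLast?.map (fun e => e.2.2) = some (ι₀ b)

/-- Composition of partitioned binary relations. -/
def comp (β : PBR Y Z) (α : PBR X Y) : PBR X Z :=
  {p | ∃ L, ConnectsVia α β L p.1 p.2}

/-- The identity PBR `ε_X`, consisting of all edges `(x^(d), x^(c))`
and `(x^(c), x^(d))`. -/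
def eps (X : Type) : PBR X X :=
  {p | ∃ x : X, p = (Sum.inl x, Sum.inr x) ∨ p = (Sum.inr x, Sum.inl x)}

/-- A labeled edge is `(α,β)`-frothy if it is an edge of the corresponding PBR
occurring in no `(α,β)`-connected sequence connecting two elements of `X ⊕ Z`. -/
def IsFrothy (α : PBR X Y) (β : PBR Y Z)
    (e : Bool × (X ⊕ Y ⊕ Z) × (X ⊕ Y ⊕ Z)) : Prop :=
  EdgeMem α β e ∧ ∀ L a b, ConnectsVia α β L a b → e ∉ L

/-- An `(α,β)`-frothy cycle. -/
def IsFrothyCycle (α : PBR X Y) (β : PBR Y Z)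
    (L : List (Bool × (X ⊕ Y ⊕ Z) × (X ⊕ Y ⊕ Z))) : Prop :=
  IsConnSeq α β L ∧ 2 ≤ L.length ∧
    L.getLast?.map (fun e => e.2.2) = L.head?.map (fun e => e.2.1) ∧
    L.head?.map (fun e => e.1) ≠ L.getLast?.map (fun e => e.1) ∧
    ∀ e ∈ L, IsFrothy α β e

/-- The type of `(α,β)`-frothy cycles. -/
def FrothyCycles (α : PBR X Y) (β : PBR Y Z) :=
  {L : List (Bool × (X ⊕ Y ⊕ Z) × (X ⊕ Y ⊕ Z)) // IsFrothyCycle α β L}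

/-- `𝔣((α,β))`: the number of equivalence classes of `(α,β)`-frothy cycles,
where the equivalence is generated by elementary equivalence (sharing a common
edge of the same PBR); note that naive equivalence (cyclic permutation) is
subsumed, since a cycle and any of its cyclic permutations share all edges. -/
noncomputable def fPBR (α : PBR X Y) (β : PBR Y Z) : ℕ :=
  Nat.card (Quot fun L L' : FrothyCycles α β => ∃ e, e ∈ L.1 ∧ e ∈ L'.1)

variable {X Y : Type} in
/-- The component `α₁₁ ⊆ X × X` of a PBR `α` on `(X,Y)`. -/
def c11 (α : PBR X Y) : Set (X × X) :=
  {q | (Sum.inl q.1, Sum.inl q.2) ∈ α}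

variable {X Y : Type} in
/-- The component `α₁₂ ⊆ X × Y` of a PBR `α` on `(X,Y)`. -/
def c12 (α : PBR X Y) : Set (X × Y) :=
  {q | (Sum.inl q.1, Sum.inr q.2) ∈ α}

variable {X Y : Type} in
/-- The component `α₂₁ ⊆ Y × X` of a PBR `α` on `(X,Y)`. -/
def c21 (α : PBR X Y) : Set (Y × X) :=
  {q | (Sum.inr q.1, Sum.inl q.2) ∈ α}

variable {X Y : Type} in
/-- The component `α₂₂ ⊆ Y × Y` of a PBR `α` on `(X,Y)`. -/
def c22 (α : PBR X Y) : Set (Y × Y) :=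
  {q | (Sum.inr q.1, Sum.inr q.2) ∈ α}

/-- Usual composition of binary relations: `η∘θ = {(x,z) : ∃ y, (x,y) ∈ θ ∧ (y,z) ∈ η}`. -/
def relComp {X Y Z : Type} (η : Set (Y × Z)) (θ : Set (X × Y)) : Set (X × Z) :=
  {p | ∃ y, (p.1, y) ∈ θ ∧ (y, p.2) ∈ η}

variable {Y : Type} in
/-- The `i`-fold relational power of a binary relation on `Y`;
`ρ^0` is the equality relation. -/
def relPow (ρ : Set (Y × Y)) : ℕ → Set (Y × Y)
  | 0 => {p | p.1 = p.2}
  | n + 1 => relComp ρ (relPow ρ n)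

open Relation

section RelPow

variable {V W : Type} {ρ : Set (Y × Y)}

lemma mem_iUnion_relPow {a b : Y} :
    (a, b) ∈ ⋃ n, relPow ρ n ↔ ReflTransGen (fun a b => (a, b) ∈ ρ) a b := by
  rw [Set.mem_iUnion]
  constructor
  · rintro ⟨n, hn⟩
    induction n generalizing b with
    | zero => exact (show a = b from hn) ▸ ReflTransGen.refl
    | succ n ih =>
      obtain ⟨c, hac, hcb⟩ := hn
      exact (ih hac).tail hcb
  · intro h
    induction h with
    | refl => exact ⟨0, rfl⟩
    | tail _ hcb ih =>
      obtain ⟨n, hn⟩ := ih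
      exact ⟨n + 1, _, hn, hcb⟩

lemma mem_iUnion_relComp_relPow {S : Set (Y × W)} {T : Set (V × Y)} {a : V} {c : W} :
    (a, c) ∈ ⋃ n, relComp S (relComp (relPow ρ n) T) ↔
      ∃ b, (a, b) ∈ T ∧ ∃ b', ReflTransGen (fun a b => (a, b) ∈ ρ) b b' ∧ (b', c) ∈ S := by
  simp only [Set.mem_iUnion, ← mem_iUnion_relPow]
  constructor
  · rintro ⟨n, b', ⟨b, hT, hn⟩, hS⟩
    exact ⟨b, hT, b', ⟨n, hn⟩, hS⟩
  · rintro ⟨b, hT, b', ⟨n, hn⟩, hS⟩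
    exact ⟨n, b', ⟨b, hT, hn⟩, hS⟩

lemma mem_iUnion_relComp_relPow_relComp {U : Type} {S : Set (Y × W)} {T₂ : Set (U × Y)}
    {T₁ : Set (V × U)} {a : V} {c : W} :
    (a, c) ∈ ⋃ n, relComp S (relComp (relPow ρ n) (relComp T₂ T₁)) ↔
      ∃ u, (a, u) ∈ T₁ ∧ (u, c) ∈ ⋃ n, relComp S (relComp (relPow ρ n) T₂) := by
  simp only [Set.mem_iUnion]
  constructor
  · rintro ⟨n, b', ⟨b, ⟨u, h₁, h₂⟩, hn⟩, hS⟩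
    exact ⟨u, h₁, n, b', ⟨b, h₂, hn⟩, hS⟩
  · rintro ⟨u, h₁, n, b', ⟨b, h₂, hn⟩, hS⟩
    exact ⟨n, b', ⟨b, ⟨u, h₁, h₂⟩, hn⟩, hS⟩

end RelPow

/-- `AltPath α β b u w`: an `(α,β)`-connected sequence from `u` to `w` whose first edge has
label `b`. -/
inductive AltPath (α : PBR X Y) (β : PBR Y Z) : Bool → X ⊕ Y ⊕ Z → X ⊕ Y ⊕ Z → Prop
  | single {b u v} : EdgeMem α β (b, u, v) → AltPath α β b u v
  | cons {b u v w} : EdgeMem α β (b, u, v) → AltPath α β (!b) v w → AltPath α β b u w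

variable {α : PBR X Y} {β : PBR Y Z}

lemma altPath_iff {b : Bool} {u w : X ⊕ Y ⊕ Z} :
    AltPath α β b u w ↔
      EdgeMem α β (b, u, w) ∨ ∃ v, EdgeMem α β (b, u, v) ∧ AltPath α β (!b) v w := by
  refine ⟨fun h => ?_, ?_⟩
  · cases h with
    | single h => exact .inl h
    | cons h p => exact .inr ⟨_, h, p⟩
  · rintro (h | ⟨v, h, p⟩)
    exacts [.single h, .cons h p]

lemma AltPath.of_isConnSeq {e : Bool × (X ⊕ Y ⊕ Z) × (X ⊕ Y ⊕ Z)}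
    {L : List (Bool × (X ⊕ Y ⊕ Z) × (X ⊕ Y ⊕ Z))} (h : IsConnSeq α β (e :: L)) :
    AltPath α β e.1 e.2.1 ((e :: L).getLast (List.cons_ne_nil _ _)).2.2 := by
  obtain ⟨-, hmem, hchain⟩ := h
  induction L generalizing e with
  | nil => exact .single (hmem e (by simp))
  | cons f L ih =>
    obtain ⟨⟨hlabel, hjoin⟩, hchain⟩ := List.isChain_cons_cons.1 hchain
    have hf : f.1 = !e.1 := Bool.eq_not_of_ne hlabel.symm
    have hrest := ih (fun g hg => hmem g (List.mem_cons_of_mem _ hg)) hchain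
    rw [hf, ← hjoin] at hrest
    simpa using AltPath.cons (hmem e (by simp)) hrest

lemma AltPath.exists_isConnSeq {b : Bool} {u w : X ⊕ Y ⊕ Z} (h : AltPath α β b u w) :
    ∃ v L, IsConnSeq α β ((b, u, v) :: L) ∧
      (((b, u, v) :: L).getLast (List.cons_ne_nil _ _)).2.2 = w := by
  induction h with
  | single h => exact ⟨_, [], ⟨by simp, by simpa using h, List.isChain_singleton _⟩, rfl⟩
  | @cons b u v w h _ ih =>
    obtain ⟨v', L, ⟨-, hmem, hchain⟩, hlast⟩ := ih
    refine ⟨v, (!b, v, v') :: L, ⟨by simp, ?_, ?_⟩, by simpa using hlast⟩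
    · simpa [h] using hmem
    · exact List.isChain_cons_cons.2 ⟨⟨by simp, rfl⟩, hchain⟩

lemma mem_comp_iff {a c : X ⊕ Z} :
    (a, c) ∈ comp β α ↔ ∃ b, AltPath α β b (ι₀ a) (ι₀ c) := by
  constructor
  · rintro ⟨_ | ⟨e, L⟩, hseq, hhead, hlast⟩
    · exact absurd rfl hseq.1
    · simp only [List.head?_cons, Option.map_some, Option.some.injEq,
        List.getLast?_eq_some_getLast hseq.1] at hhead hlast
      exact ⟨e.1, hhead ▸ hlast ▸ AltPath.of_isConnSeq hseq⟩
  · rintro ⟨b, h⟩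
    obtain ⟨v, L, hseq, hlast⟩ := h.exists_isConnSeq
    exact ⟨_, hseq, by simp, by simp [List.getLast?_eq_some_getLast hseq.1, hlast]⟩

lemma edgeMem_false_inl_iff {x : X} {v : X ⊕ Y ⊕ Z} :
    EdgeMem α β (false, Sum.inl x, v) ↔
      (∃ x', v = Sum.inl x' ∧ (x, x') ∈ c11 α) ∨ ∃ y, v = Sum.inr (Sum.inl y) ∧ (x, y) ∈ c12 α := by
  simp only [EdgeMem, Bool.false_eq_true, if_false, Prod.exists, Sum.exists, ι₁, c11, c12]
  aesop

lemma edgeMem_false_mid_iff {y : Y} {v : X ⊕ Y ⊕ Z} :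
    EdgeMem α β (false, Sum.inr (Sum.inl y), v) ↔
      (∃ x, v = Sum.inl x ∧ (y, x) ∈ c21 α) ∨ ∃ y', v = Sum.inr (Sum.inl y') ∧ (y, y') ∈ c22 α := by
  simp only [EdgeMem, Bool.false_eq_true, if_false, Prod.exists, Sum.exists, ι₁, c21, c22]
  aesop

lemma edgeMem_true_mid_iff {y : Y} {v : X ⊕ Y ⊕ Z} :
    EdgeMem α β (true, Sum.inr (Sum.inl y), v) ↔
      (∃ y', v = Sum.inr (Sum.inl y') ∧ (y, y') ∈ c11 β) ∨
        ∃ z, v = Sum.inr (Sum.inr z) ∧ (y, z) ∈ c12 β := by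
  simp only [EdgeMem, if_true, Prod.exists, Sum.exists, ι₂, c11, c12]
  aesop

lemma edgeMem_true_inr_iff {z : Z} {v : X ⊕ Y ⊕ Z} :
    EdgeMem α β (true, Sum.inr (Sum.inr z), v) ↔
      (∃ y, v = Sum.inr (Sum.inl y) ∧ (z, y) ∈ c21 β) ∨
        ∃ z', v = Sum.inr (Sum.inr z') ∧ (z, z') ∈ c22 β := by
  simp only [EdgeMem, if_true, Prod.exists, Sum.exists, ι₂, c21, c22]
  aesop

lemma not_altPath_true_inl {x : X} {w : X ⊕ Y ⊕ Z} : ¬ AltPath α β true (Sum.inl x) w := by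
  rw [altPath_iff]
  simp [EdgeMem, Prod.exists, Sum.exists, ι₂]

lemma not_altPath_false_inr_inr {z : Z} {w : X ⊕ Y ⊕ Z} :
    ¬ AltPath α β false (Sum.inr (Sum.inr z)) w := by
  rw [altPath_iff]
  simp [EdgeMem, Prod.exists, Sum.exists, ι₁]

lemma AltPath.exists_reflTransGen_of_mid_inl {b : Bool} {y : Y} {x : X}
    (h : AltPath α β b (Sum.inr (Sum.inl y)) (Sum.inl x)) :
    ∃ y₀, (if b then (y, y₀) ∈ c11 β else y₀ = y) ∧
      ∃ y', ReflTransGen (fun a b => (a, b) ∈ relComp (c11 β) (c22 α)) y₀ y' ∧ (y', x) ∈ c21 α := by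
  generalize hu : (Sum.inr (Sum.inl y) : X ⊕ Y ⊕ Z) = u at h
  generalize hw : (Sum.inl x : X ⊕ Y ⊕ Z) = w at h
  induction h generalizing y with
  | @single b u w e =>
    subst hu hw
    cases b
    · obtain ⟨x', ⟨⟩, hexit⟩ | ⟨y', ⟨⟩, -⟩ := edgeMem_false_mid_iff.1 e
      exact ⟨y, rfl, y, .refl, hexit⟩
    · obtain ⟨y', ⟨⟩, -⟩ | ⟨z, ⟨⟩, -⟩ := edgeMem_true_mid_iff.1 e
  | @cons b u v w e p ih =>
    subst hu
    cases b
    · obtain ⟨x', rfl, -⟩ | ⟨y', rfl, hα⟩ := edgeMem_false_mid_iff.1 e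
      · exact absurd p not_altPath_true_inl
      · obtain ⟨y₁, hβ, hR⟩ := ih rfl hw
        exact ⟨y, rfl, hR.imp fun _ ⟨hpath, hexit⟩ => ⟨.head ⟨y', hα, hβ⟩ hpath, hexit⟩⟩
    · obtain ⟨y', rfl, hβ⟩ | ⟨z, rfl, -⟩ := edgeMem_true_mid_iff.1 e
      · obtain ⟨y₀, rfl, hR⟩ := ih rfl hw
        exact ⟨y₀, hβ, hR⟩
      · exact absurd p not_altPath_false_inr_inr

lemma altPath_false_mid_inl {y : Y} {x : X}
    (h : ∃ y', ReflTransGen (fun a b => (a, b) ∈ relComp (c11 β) (c22 α)) y y' ∧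
      (y', x) ∈ c21 α) :
    AltPath α β false (Sum.inr (Sum.inl y)) (Sum.inl x) := by
  obtain ⟨y', hpath, hexit⟩ := h
  induction hpath using ReflTransGen.head_induction_on with
  | refl => exact .single (edgeMem_false_mid_iff.2 (.inl ⟨x, rfl, hexit⟩))
  | head hstep _ ih =>
    obtain ⟨y₀, hα, hβ⟩ := hstep
    exact .cons (edgeMem_false_mid_iff.2 (.inr ⟨y₀, rfl, hα⟩))
      (.cons (edgeMem_true_mid_iff.2 (.inl ⟨_, rfl, hβ⟩)) ih)

lemma altPath_mid_inl_iff {b : Bool} {y : Y} {x : X} :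
    AltPath α β b (Sum.inr (Sum.inl y)) (Sum.inl x) ↔
      ∃ y₀, (if b then (y, y₀) ∈ c11 β else y₀ = y) ∧
        ∃ y', ReflTransGen (fun a b => (a, b) ∈ relComp (c11 β) (c22 α)) y₀ y' ∧
          (y', x) ∈ c21 α := by
  refine ⟨AltPath.exists_reflTransGen_of_mid_inl, fun ⟨y₀, hy₀, hR⟩ => ?_⟩
  cases b
  · cases hy₀
    exact altPath_false_mid_inl hR
  · exact .cons (edgeMem_true_mid_iff.2 (.inl ⟨y₀, rfl, hy₀⟩)) (altPath_false_mid_inl hR)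

lemma AltPath.exists_reflTransGen_of_mid_inr {b : Bool} {y : Y} {z : Z}
    (h : AltPath α β b (Sum.inr (Sum.inl y)) (Sum.inr (Sum.inr z))) :
    ∃ y₀, (if b then y₀ = y else (y, y₀) ∈ c22 α) ∧
      ∃ y', ReflTransGen (fun a b => (a, b) ∈ relComp (c22 α) (c11 β)) y₀ y' ∧ (y', z) ∈ c12 β := by
  generalize hu : (Sum.inr (Sum.inl y) : X ⊕ Y ⊕ Z) = u at h
  generalize hw : (Sum.inr (Sum.inr z) : X ⊕ Y ⊕ Z) = w at h
  induction h generalizing y with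
  | @single b u w e =>
    subst hu hw
    cases b
    · obtain ⟨x, ⟨⟩, -⟩ | ⟨y', ⟨⟩, -⟩ := edgeMem_false_mid_iff.1 e
    · obtain ⟨y', ⟨⟩, -⟩ | ⟨z', ⟨⟩, hexit⟩ := edgeMem_true_mid_iff.1 e
      exact ⟨y, rfl, y, .refl, hexit⟩
  | @cons b u v w e p ih =>
    subst hu
    cases b
    · obtain ⟨x, rfl, -⟩ | ⟨y', rfl, hα⟩ := edgeMem_false_mid_iff.1 e
      · exact absurd p not_altPath_true_inl
      · obtain ⟨y₀, rfl, hR⟩ := ih rfl hw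
        exact ⟨y₀, hα, hR⟩
    · obtain ⟨y', rfl, hβ⟩ | ⟨z', rfl, -⟩ := edgeMem_true_mid_iff.1 e
      · obtain ⟨y₁, hα, hR⟩ := ih rfl hw
        exact ⟨y, rfl, hR.imp fun _ ⟨hpath, hexit⟩ => ⟨.head ⟨y', hβ, hα⟩ hpath, hexit⟩⟩
      · exact absurd p not_altPath_false_inr_inr

lemma altPath_true_mid_inr {y : Y} {z : Z}
    (h : ∃ y', ReflTransGen (fun a b => (a, b) ∈ relComp (c22 α) (c11 β)) y y' ∧
      (y', z) ∈ c12 β) :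
    AltPath α β true (Sum.inr (Sum.inl y)) (Sum.inr (Sum.inr z)) := by
  obtain ⟨y', hpath, hexit⟩ := h
  induction hpath using ReflTransGen.head_induction_on with
  | refl => exact .single (edgeMem_true_mid_iff.2 (.inr ⟨z, rfl, hexit⟩))
  | head hstep _ ih =>
    obtain ⟨y₀, hβ, hα⟩ := hstep
    exact .cons (edgeMem_true_mid_iff.2 (.inl ⟨y₀, rfl, hβ⟩))
      (.cons (edgeMem_false_mid_iff.2 (.inr ⟨_, rfl, hα⟩)) ih)

lemma altPath_mid_inr_iff {b : Bool} {y : Y} {z : Z} :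
    AltPath α β b (Sum.inr (Sum.inl y)) (Sum.inr (Sum.inr z)) ↔
      ∃ y₀, (if b then y₀ = y else (y, y₀) ∈ c22 α) ∧
        ∃ y', ReflTransGen (fun a b => (a, b) ∈ relComp (c22 α) (c11 β)) y₀ y' ∧
          (y', z) ∈ c12 β := by
  refine ⟨AltPath.exists_reflTransGen_of_mid_inr, fun ⟨y₀, hy₀, hR⟩ => ?_⟩
  cases b
  · exact .cons (edgeMem_false_mid_iff.2 (.inr ⟨y₀, rfl, hy₀⟩)) (altPath_true_mid_inr hR)
  · cases hy₀
    exact altPath_true_mid_inr hR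

lemma c12_comp : c12 (comp β α) =
    ⋃ i : ℕ, relComp (c12 β) (relComp (relPow (relComp (c22 α) (c11 β)) i) (c12 α)) := by
  ext ⟨x, z⟩
  rw [mem_iUnion_relComp_relPow]
  change ((Sum.inl x : X ⊕ Z), (Sum.inr z : X ⊕ Z)) ∈ comp β α ↔ _
  rw [mem_comp_iff, Bool.exists_bool]
  simp only [ι₀, Sum.elim_inl, not_altPath_true_inl, or_false]
  rw [altPath_iff]
  simp [edgeMem_false_inl_iff, not_altPath_true_inl, altPath_mid_inr_iff]

lemma c21_comp : c21 (comp β α) =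
    ⋃ i : ℕ, relComp (c21 α) (relComp (relPow (relComp (c11 β) (c22 α)) i) (c21 β)) := by
  ext ⟨z, x⟩
  rw [mem_iUnion_relComp_relPow]
  change ((Sum.inr z : X ⊕ Z), (Sum.inl x : X ⊕ Z)) ∈ comp β α ↔ _
  rw [mem_comp_iff, Bool.exists_bool]
  simp only [ι₀, Sum.elim_inr, not_altPath_false_inr_inr, false_or]
  rw [altPath_iff]
  simp [edgeMem_true_inr_iff, not_altPath_false_inr_inr, altPath_mid_inl_iff]

lemma c11_comp : c11 (comp β α) = c11 α ∪
    ⋃ i : ℕ, relComp (c21 α)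
      (relComp (relPow (relComp (c11 β) (c22 α)) i) (relComp (c11 β) (c12 α))) := by
  ext ⟨x, x'⟩
  simp only [Set.mem_union, mem_iUnion_relComp_relPow_relComp, mem_iUnion_relComp_relPow]
  change ((Sum.inl x : X ⊕ Z), (Sum.inl x' : X ⊕ Z)) ∈ comp β α ↔ _
  rw [mem_comp_iff, Bool.exists_bool]
  simp only [ι₀, Sum.elim_inl, not_altPath_true_inl, or_false]
  rw [altPath_iff]
  simp [edgeMem_false_inl_iff, not_altPath_true_inl, altPath_mid_inl_iff]

lemma c22_comp : c22 (comp β α) = c22 β ∪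
    ⋃ i : ℕ, relComp (c12 β)
      (relComp (relPow (relComp (c22 α) (c11 β)) i) (relComp (c22 α) (c21 β))) := by
  ext ⟨z, z'⟩
  simp only [Set.mem_union, mem_iUnion_relComp_relPow_relComp, mem_iUnion_relComp_relPow]
  change ((Sum.inr z : X ⊕ Z), (Sum.inr z' : X ⊕ Z)) ∈ comp β α ↔ _
  rw [mem_comp_iff, Bool.exists_bool]
  simp only [ι₀, Sum.elim_inr, not_altPath_false_inr_inr, false_or]
  rw [altPath_iff]
  simp [edgeMem_true_inr_iff, not_altPath_false_inr_inr, altPath_mid_inr_iff]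

theorem pbr_comp_components_general (X Y Z : Type) (α : PBR X Y) (β : PBR Y Z) :
    c12 (comp β α) =
      ⋃ i : ℕ, relComp (c12 β) (relComp (relPow (relComp (c22 α) (c11 β)) i) (c12 α)) ∧
    c21 (comp β α) =
      ⋃ i : ℕ, relComp (c21 α) (relComp (relPow (relComp (c11 β) (c22 α)) i) (c21 β)) ∧
    c11 (comp β α) = c11 α ∪
      ⋃ i : ℕ, relComp (c21 α)
        (relComp (relPow (relComp (c11 β) (c22 α)) i) (relComp (c11 β) (c12 α))) ∧
    c22 (comp β α) = c22 β ∪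
      ⋃ i : ℕ, relComp (c12 β)
        (relComp (relPow (relComp (c22 α) (c11 β)) i) (relComp (c22 α) (c21 β))) :=
  ⟨c12_comp, c21_comp, c11_comp, c22_comp⟩

/-- The components of the PBR composition `β∘α` in terms of the components of
`α` and `β`, via usual composition of binary relations. -/
theorem pbr_comp_components (X Y Z : Type) [Fintype X] [Fintype Y] [Fintype Z]
    (α : PBR X Y) (β : PBR Y Z) :
    c12 (comp β α) =
      ⋃ i : ℕ, relComp (c12 β) (relComp (relPow (relComp (c22 α) (c11 β)) i) (c12 α)) ∧
    c21 (comp β α) =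
      ⋃ i : ℕ, relComp (c21 α) (relComp (relPow (relComp (c11 β) (c22 α)) i) (c21 β)) ∧
    c11 (comp β α) = c11 α ∪
      ⋃ i : ℕ, relComp (c21 α)
        (relComp (relPow (relComp (c11 β) (c22 α)) i) (relComp (c11 β) (c12 α))) ∧
    c22 (comp β α) = c22 β ∪
      ⋃ i : ℕ, relComp (c12 β)
        (relComp (relPow (relComp (c22 α) (c11 β)) i) (relComp (c22 α) (c21 β))) :=
  pbr_comp_components_general X Y Z α β

end PBRPaper
end

section
/- For n ∈ ℕ let B_n be the set of binary relations on Fin n (i.e. subsets of Fin n × Fin n), let ω_n ∈ B_n be the full relation Fin n × Fin n, and let ∘ denote usual composition of binary relations. Then the proportion of triples composing to the full relation tends to 1: the real sequence |{(α,α',α'') ∈ B_n × B_n × B_n : α∘α'∘α'' = ω_n}| / |B_n|³ converges to 1 as n → ∞. -/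
/-!
A triple `(α, β, γ)` can fail to compose to the full relation only if some row of `γ` is empty
or some pair `(w, z)` admits no `y` with `(w, y) ∈ β` and `(y, z) ∈ α`. For uniformly random
relations on an `n`-element set, the first event fixes `n` independent coordinates of `γ` and
has probability `2⁻ⁿ`; the second excludes one of four values at `n` independent pairs of
coordinates and has probability `(3/4)ⁿ`. A union bound over the `n + n²` events bounds the
failure probability by `n 2⁻ⁿ + n² (3/4)ⁿ → 0`.
-/

namespace PBRPaper

open Finset

theorem exists_row_empty_or_no_path_of_relComp_ne_univ {X W Y Z : Type} {α : Set (Y × Z)}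
    {β : Set (W × Y)} {γ : Set (X × W)} (h : relComp α (relComp β γ) ≠ Set.univ) :
    (∃ x, ∀ w, (x, w) ∉ γ) ∨ ∃ w z, ∀ y, ¬((w, y) ∈ β ∧ (y, z) ∈ α) := by
  obtain ⟨⟨x, z⟩, hxz⟩ := (Set.ne_univ_iff_exists_notMem _).1 h
  by_cases hrow : ∃ w, (x, w) ∈ γ
  · obtain ⟨w, hw⟩ := hrow
    exact Or.inr ⟨w, z, fun y hy => hxz ⟨y, ⟨w, hw, hy.1⟩, hy.2⟩⟩
  · exact Or.inl ⟨x, fun w hw => hrow ⟨w, hw⟩⟩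

theorem card_subtype_forall_mem_pi {ι : Type*} [Fintype ι] {β : ι → Type*} (T : ∀ i, Set (β i)) :
    Nat.card {f : ∀ i, β i // ∀ i, f i ∈ T i} = ∏ i, Nat.card (T i) := by
  rw [Nat.card_congr Equiv.subtypePiEquivPi, Nat.card_pi]

theorem card_subtype_forall_mem_eq {ι β : Type*} [Fintype ι] [Finite β] [Nonempty β]
    (s : Finset ι) (T : Set β) :
    (Nat.card {f : ι → β // ∀ i ∈ s, f i ∈ T} : ℝ) =
      (Nat.card T / Nat.card β : ℝ) ^ #s * Nat.card (ι → β) := by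
  classical
  have hβ : (Nat.card β : ℝ) ≠ 0 := Nat.cast_ne_zero.mpr Nat.card_pos.ne'
  have hfactor (i : ι) : (Nat.card ({b | i ∈ s → b ∈ T} : Set β) : ℝ) =
      (if i ∈ s then (Nat.card T / Nat.card β : ℝ) else 1) * Nat.card β := by
    by_cases hi : i ∈ s <;> simp [hi, hβ]
  have hpi : Nat.card {f : ι → β // ∀ i ∈ s, f i ∈ T} =
      ∏ i, Nat.card ({b | i ∈ s → b ∈ T} : Set β) :=
    card_subtype_forall_mem_pi fun i => {b | i ∈ s → b ∈ T}
  rw [hpi, Nat.card_fun, Nat.card_eq_fintype_card (α := ι)]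
  push_cast
  simp_rw [hfactor]
  rw [prod_mul_distrib, Fintype.prod_ite_mem, prod_const, prod_const, card_univ]

theorem card_subtype_snd {α β : Type*} (p : β → Prop) :
    Nat.card {t : α × β // p t.2} = Nat.card α * Nat.card {b // p b} := by
  rw [← Nat.card_prod]
  exact Nat.card_congr
    { toFun t := (t.1.1, ⟨t.1.2, t.2⟩), invFun u := ⟨(u.1, u.2.1), u.2.2⟩
      left_inv _ := rfl, right_inv _ := rfl }

theorem card_subtype_fst {α β : Type*} (p : α → Prop) :
    Nat.card {t : α × β // p t.1} = Nat.card {a // p a} * Nat.card β := by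
  rw [Nat.card_congr Equiv.prodSubtypeFstEquivSubtypeProd, Nat.card_prod]

theorem card_subtype_le_sum_card_subtype {α ι : Type*} [Finite α] [Fintype ι] {p : α → Prop}
    (q : ι → α → Prop) (h : ∀ a, p a → ∃ i, q i a) :
    Nat.card {a // p a} ≤ ∑ i, Nat.card {a // q i a} := by
  calc Nat.card {a // p a} = {a | p a}.ncard := Nat.card_coe_set_eq _
    _ ≤ (⋃ i ∈ (univ : Finset ι), {a | q i a}).ncard :=
        Set.ncard_le_ncard fun a ha => by simpa using h a ha
    _ ≤ ∑ i, {a | q i a}.ncard := univ.set_ncard_biUnion_le _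
    _ = ∑ i, Nat.card {a // q i a} := sum_congr rfl fun i _ => (Nat.card_coe_set_eq _).symm

theorem one_sub_le_card_subtype_div {α : Type*} [Finite α] [Nonempty α] (p : α → Prop) {ε : ℝ}
    (h : (Nat.card {a // ¬p a} : ℝ) ≤ ε * Nat.card α) :
    1 - ε ≤ Nat.card {a // p a} / Nat.card α := by
  have hpos : (0 : ℝ) < Nat.card α := by exact_mod_cast Nat.card_pos
  have hsum : (Nat.card {a // p a} : ℝ) + Nat.card {a // ¬p a} = Nat.card α := by
    exact_mod_cast Set.ncard_add_ncard_compl {a | p a}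
  rw [le_div_iff₀ hpos]
  linarith

theorem card_prop : Nat.card Prop = 2 := by
  simp [Nat.card_eq_fintype_card]

theorem card_prop_not : Nat.card ({p | ¬p} : Set Prop) = 1 := by
  rw [show ({p | ¬p} : Set Prop) = {False} by ext; simp]
  simp

theorem card_prop_prod_not_and :
    Nat.card ({p | ¬(p.1 ∧ p.2)} : Set (Prop × Prop)) = 3 := by
  rw [show ({p | ¬(p.1 ∧ p.2)} : Set (Prop × Prop)) = {(True, True)}ᶜ by
      ext ⟨a, b⟩; simp [Prod.ext_iff],
    Nat.card_coe_set_eq, Set.ncard_compl]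
  simp [Nat.card_eq_fintype_card]

section Twist

variable {X : Type*} [DecidableEq X]

def twist (w z : X) : X × X ≃ X × X :=
  (Equiv.prodComm X X).trans ((Equiv.swap z w).prodCongr (Equiv.refl X))

theorem twist_apply (w z y : X) : twist w z (y, z) = (w, y) := by
  simp [twist]

/-- Puts the two links `(y, z) ∈ α` and `(w, y) ∈ β` of a path `w → y → z` at the same
coordinate `(y, z)`. -/
def pairTwist (w z : X) : Set (X × X) × Set (X × X) ≃ (X × X → Prop × Prop) where
  toFun ab q := (q ∈ ab.1, twist w z q ∈ ab.2)
  invFun F := ({q | (F q).1}, {q | (F ((twist w z).symm q)).2})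
  left_inv ab := by ext <;> simp
  right_inv F := by ext <;> simp

end Twist

section Relations

variable {X : Type*} [Fintype X]

theorem card_rel_with_empty_row {W : Type*} [Fintype W] (x : X) :
    (Nat.card {γ : Set (X × W) // ∀ w, (x, w) ∉ γ} : ℝ) =
      (1 / 2) ^ Fintype.card W * Nat.card (Set (X × W)) := by
  have h := card_subtype_forall_mem_eq (univ.map (Function.Embedding.sectR x W))
    ({p | ¬p} : Set Prop)
  simp only [card_prop_not, card_prop, card_map, card_univ, forall_mem_map, mem_univ,
    forall_const, Function.Embedding.sectR_apply] at h
  push_cast at h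
  exact h

theorem card_triple_with_empty_row (x : X) :
    (Nat.card {t : Set (X × X) × Set (X × X) × Set (X × X) // ∀ w, (x, w) ∉ t.2.2} : ℝ) =
      (1 / 2) ^ Fintype.card X * Nat.card (Set (X × X) × Set (X × X) × Set (X × X)) := by
  rw [card_subtype_snd (fun bc : Set (X × X) × Set (X × X) => ∀ w, (x, w) ∉ bc.2),
    card_subtype_snd (fun c : Set (X × X) => ∀ w, (x, w) ∉ c)]
  push_cast
  rw [card_rel_with_empty_row]
  simp only [Nat.card_prod]
  push_cast
  ring

variable [DecidableEq X]

theorem card_rel_pair_without_path (w z : X) :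
    (Nat.card {ab : Set (X × X) × Set (X × X) // ∀ y, ¬((w, y) ∈ ab.2 ∧ (y, z) ∈ ab.1)} : ℝ) =
      (3 / 4) ^ Fintype.card X * Nat.card (Set (X × X) × Set (X × X)) := by
  have hcoord : Nat.card {ab : Set (X × X) × Set (X × X) //
        ∀ y, ¬((w, y) ∈ ab.2 ∧ (y, z) ∈ ab.1)} =
      Nat.card {F : X × X → Prop × Prop //
        ∀ q ∈ univ.map (Function.Embedding.sectL X z), F q ∈ {p | ¬(p.1 ∧ p.2)}} :=
    Nat.card_congr ((pairTwist w z).subtypeEquiv fun ab => by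
      simp [pairTwist, twist_apply, imp_not_comm])
  rw [hcoord, card_subtype_forall_mem_eq, ← Nat.card_congr (pairTwist w z),
    card_prop_prod_not_and, Nat.card_prod, card_prop, card_map, card_univ]
  norm_num

theorem card_triple_without_path (w z : X) :
    (Nat.card {t : Set (X × X) × Set (X × X) × Set (X × X) //
        ∀ y, ¬((w, y) ∈ t.2.1 ∧ (y, z) ∈ t.1)} : ℝ) =
      (3 / 4) ^ Fintype.card X * Nat.card (Set (X × X) × Set (X × X) × Set (X × X)) := by
  have hassoc : Nat.card {t : Set (X × X) × Set (X × X) × Set (X × X) //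
        ∀ y, ¬((w, y) ∈ t.2.1 ∧ (y, z) ∈ t.1)} =
      Nat.card {t : (Set (X × X) × Set (X × X)) × Set (X × X) //
        ∀ y, ¬((w, y) ∈ t.1.2 ∧ (y, z) ∈ t.1.1)} :=
    Nat.card_congr ((Equiv.prodAssoc _ _ _).symm.subtypeEquiv fun _ => Iff.rfl)
  rw [hassoc, card_subtype_fst (fun ab : Set (X × X) × Set (X × X) =>
      ∀ y, ¬((w, y) ∈ ab.2 ∧ (y, z) ∈ ab.1))]
  push_cast
  rw [card_rel_pair_without_path]
  simp only [Nat.card_prod]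
  push_cast
  ring

end Relations

theorem card_relComp_ne_univ_le {X : Type} [Fintype X] [DecidableEq X] :
    (Nat.card {t : Set (X × X) × Set (X × X) × Set (X × X) //
        relComp t.1 (relComp t.2.1 t.2.2) ≠ Set.univ} : ℝ) ≤
      (Fintype.card X * (1 / 2) ^ Fintype.card X +
          Fintype.card X ^ 2 * (3 / 4) ^ Fintype.card X) *
        Nat.card (Set (X × X) × Set (X × X) × Set (X × X)) := by
  have hunion := card_subtype_le_sum_card_subtype
    (p := fun t : Set (X × X) × Set (X × X) × Set (X × X) =>
      relComp t.1 (relComp t.2.1 t.2.2) ≠ Set.univ)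
    (Sum.elim (fun x t => ∀ w, (x, w) ∉ t.2.2)
      fun (wz : X × X) t => ∀ y, ¬((wz.1, y) ∈ t.2.1 ∧ (y, wz.2) ∈ t.1))
    fun t ht => by
      rcases exists_row_empty_or_no_path_of_relComp_ne_univ ht with ⟨x, hx⟩ | ⟨w, z, hwz⟩
      exacts [⟨Sum.inl x, hx⟩, ⟨Sum.inr (w, z), hwz⟩]
  rw [Fintype.sum_sum_type] at hunion
  calc _ ≤ (∑ x : X, (Nat.card {t : Set (X × X) × Set (X × X) × Set (X × X) //
          ∀ w, (x, w) ∉ t.2.2} : ℝ)) +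
        ∑ wz : X × X, (Nat.card {t : Set (X × X) × Set (X × X) × Set (X × X) //
          ∀ y, ¬((wz.1, y) ∈ t.2.1 ∧ (y, wz.2) ∈ t.1)} : ℝ) := by exact_mod_cast hunion
    _ = _ := by
      simp only [card_triple_with_empty_row, card_triple_without_path, sum_const, card_univ,
        Fintype.card_prod, nsmul_eq_mul]
      push_cast
      ring

/-- Almost all triples of binary relations on `Fin n` compose to the full
relation: the proportion of triples `(α,α',α'')` with `α∘α'∘α'' = ω_n` tends
to `1` as `n → ∞`. -/
theorem random_triple_products_full :
    Filter.Tendsto (fun n : ℕ =>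
      (Nat.card {t : Set (Fin n × Fin n) × Set (Fin n × Fin n) × Set (Fin n × Fin n) //
          relComp t.1 (relComp t.2.1 t.2.2) = (Set.univ : Set (Fin n × Fin n))} : ℝ) /
        (Nat.card (Set (Fin n × Fin n)) : ℝ) ^ 3)
      Filter.atTop (nhds 1) := by
  have hbound : Filter.Tendsto (fun n : ℕ => (n : ℝ) * (1 / 2) ^ n + (n : ℝ) ^ 2 * (3 / 4) ^ n)
      Filter.atTop (nhds 0) := by
    simpa using (tendsto_pow_const_mul_const_pow_of_abs_lt_one 1
      (by norm_num : |(1 / 2 : ℝ)| < 1)).add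
      (tendsto_pow_const_mul_const_pow_of_abs_lt_one 2 (by norm_num : |(3 / 4 : ℝ)| < 1))
  have hcube (n : ℕ) : (Nat.card (Set (Fin n × Fin n)) : ℝ) ^ 3 =
      Nat.card (Set (Fin n × Fin n) × Set (Fin n × Fin n) × Set (Fin n × Fin n)) := by
    simp only [Nat.card_prod]
    push_cast
    ring
  refine tendsto_of_tendsto_of_tendsto_of_le_of_le (by simpa using hbound.const_sub 1)
    tendsto_const_nhds (fun n => ?_) fun n => ?_
  · rw [hcube]
    apply one_sub_le_card_subtype_div
    simpa using card_relComp_ne_univ_le (X := Fin n)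
  · rw [hcube]
    exact div_le_one_of_le₀ (Nat.cast_le.mpr (Finite.card_subtype_le _)) (Nat.cast_nonneg _)

end PBRPaper
end

section
/- For n ∈ ℕ let P_n denote the set of PBRs on (Fin n, Fin n) and let ω̄_n ∈ P_n be the full PBR, containing all pairs of elements of Fin n ⊕ Fin n as edges. Then the proportion of pairs of PBRs composing to the full PBR tends to 1: the real sequence |{(α,β) ∈ P_n × P_n : β∘α = ω̄_n}| / |P_n|² converges to 1 as n → ∞. -/
open Function

theorem Nat.card_subtype_comp_mul_card {V A β : Type*} {f : A → V} (hf : Injective f)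
    (p : (A → β) → Prop) :
    Nat.card {g : V → β // p (g ∘ f)} * Nat.card (A → β) =
      Nat.card {h : A → β // p h} * Nat.card (V → β) := by
  classical
  let E : (V → β) ≃ (A → β) × ({v // v ∉ Set.range f} → β) :=
    (Equiv.piEquivPiSubtypeProd (· ∈ Set.range f) fun _ => β).trans
      (Equiv.prodCongr ((Equiv.ofInjective f hf).arrowCongr (Equiv.refl β)).symm (Equiv.refl _))
  have hsplit : {g : V → β // p (g ∘ f)} ≃ {h : A → β // p h} × ({v // v ∉ Set.range f} → β) :=
    (E.subtypeEquiv fun _ => Iff.rfl).trans Equiv.prodSubtypeFstEquivSubtypeProd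
  rw [Nat.card_congr hsplit, Nat.card_congr E, Nat.card_prod, Nat.card_prod]
  ring

theorem Nat.card_forall_exists_not {ι κ : Type*} [Fintype ι] [Finite κ] :
    Nat.card {h : ι × κ → Prop // ∀ i, ∃ k, ¬ h (i, k)} =
      (2 ^ Nat.card κ - 1) ^ Fintype.card ι := by
  have hrow : Nat.card {t : κ → Prop // ∃ k, ¬ t k} = 2 ^ Nat.card κ - 1 := by
    have hcompl : {t : κ → Prop // ∃ k, ¬ t k} ≃ ↥({fun _ => True}ᶜ : Set (κ → Prop)) :=
      Equiv.subtypeEquivRight fun t => by simp [funext_iff]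
    have := Set.ncard_add_ncard_compl {fun (_ : κ) => True}
    rw [Set.ncard_singleton, Nat.card_fun, Nat.card_eq_fintype_card (α := Prop),
      Fintype.card_prop] at this
    rw [Nat.card_congr hcompl, Nat.card_coe_set_eq]
    omega
  let E : {h : ι × κ → Prop // ∀ i, ∃ k, ¬ h (i, k)} ≃ (ι → {t : κ → Prop // ∃ k, ¬ t k}) :=
    ((Equiv.curry ι κ Prop).subtypeEquiv (q := fun t => ∀ i, ∃ k, ¬ t i k) fun _ => Iff.rfl).trans
      (Equiv.subtypePiEquivPi (p := fun (_ : ι) (t : κ → Prop) => ∃ k, ¬ t k))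
  rw [Nat.card_congr E, Nat.card_pi, hrow, Finset.prod_const, Finset.card_univ]

theorem Nat.card_subtype_div_card_eq_one_sub {α : Type*} [Finite α] [Nonempty α]
    (p : α → Prop) :
    (Nat.card {x // p x} : ℝ) / Nat.card α = 1 - ({x | ¬ p x}.ncard : ℝ) / Nat.card α := by
  have hsum := Set.ncard_add_ncard_compl {x | p x}
  have hpos : (0 : ℝ) < Nat.card α := by exact_mod_cast Nat.card_pos
  rw [eq_sub_iff_add_eq, ← add_div, div_eq_one_iff_eq hpos.ne', ← hsum]
  push_cast
  rfl

namespace PBRPaper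

open Sum

variable {X Y Z : Type}

abbrev EdgeSlot (X Y Z : Type) : Type := (X ⊕ Y) × (X ⊕ Y) ⊕ (Y ⊕ Z) × (Y ⊕ Z)

def EdgeSlot.label : EdgeSlot X Y Z → Bool × (X ⊕ Y ⊕ Z) × (X ⊕ Y ⊕ Z) :=
  Sum.elim (fun p => (false, ι₁ p.1, ι₁ p.2)) (fun p => (true, ι₂ p.1, ι₂ p.2))

def pairEquiv : PBR X Y × PBR Y Z ≃ (EdgeSlot X Y Z → Prop) :=
  (Equiv.sumArrowEquivProdArrow _ _ _).symm

theorem edgeMem_label {α : PBR X Y} {β : PBR Y Z} {s : EdgeSlot X Y Z}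
    (h : pairEquiv (α, β) s) : EdgeMem α β s.label := by
  rcases s with p | p
  exacts [⟨p, h, rfl, rfl⟩, ⟨p, h, rfl, rfl⟩]

-- Slot `0` is an edge from `a` into `y`, slots `1` and `2` are the loops of `α` and `β` at `y`,
-- and slot `3` is an edge from `y` to `b`.
def hubEdges (a b : X ⊕ Z) (y : Y) : Fin 4 → EdgeSlot X Y Z :=
  ![a.elim (fun x => inl (inl x, inr y)) (fun z => inr (inr z, inl y)),
    inl (inr y, inr y), inr (inl y, inl y),
    b.elim (fun x => inl (inr y, inl x)) (fun z => inr (inl y, inr z))]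

-- Successive edges must come from different PBRs: between the entry and exit edges use one loop
-- if they come from the same PBR, and both loops otherwise.
def hubRoute : X ⊕ Z → X ⊕ Z → List (Fin 4)
  | inl _, inl _ => [0, 2, 3]
  | inl _, inr _ => [0, 2, 1, 3]
  | inr _, inl _ => [0, 1, 2, 3]
  | inr _, inr _ => [0, 1, 3]

def IsHub (q : PBR X Y × PBR Y Z) (a b : X ⊕ Z) (y : Y) : Prop :=
  ∀ i, pairEquiv q (hubEdges a b y i)

theorem connectsVia_hubRoute {α : PBR X Y} {β : PBR Y Z} {a b : X ⊕ Z} {y : Y}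
    (h : IsHub (α, β) a b y) :
    ConnectsVia α β ((hubRoute a b).map fun i => (hubEdges a b y i).label) a b := by
  refine ⟨⟨?_, ?_, ?_⟩, ?_, ?_⟩
  · rcases a with _ | _ <;> rcases b with _ | _ <;> simp [hubRoute]
  · simp only [List.mem_map]
    rintro _ ⟨i, -, rfl⟩
    exact edgeMem_label (h i)
  · change List.IsChain _ _
    rcases a with _ | _ <;> rcases b with _ | _ <;>
      simp [hubRoute, hubEdges, EdgeSlot.label, ι₁, ι₂]
  all_goals rcases a with _ | _ <;> rcases b with _ | _ <;> rfl

theorem mem_comp_of_isHub {α : PBR X Y} {β : PBR Y Z} {a b : X ⊕ Z} {y : Y}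
    (h : IsHub (α, β) a b y) : (a, b) ∈ comp β α :=
  ⟨_, connectsVia_hubRoute h⟩

theorem hubEdges_injective (a b : X ⊕ Z) :
    Injective fun p : Y × Fin 4 => hubEdges a b p.1 p.2 := by
  rintro ⟨y, i⟩ ⟨y', j⟩ h
  rcases a with _ | _ <;> rcases b with _ | _ <;>
    fin_cases i <;> fin_cases j <;> simp_all [hubEdges]

theorem card_forall_not_isHub_mul [Fintype Y] (a b : X ⊕ Z) :
    Nat.card {q : PBR X Y × PBR Y Z // ∀ y, ¬ IsHub q a b y} * 16 ^ Fintype.card Y =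
      15 ^ Fintype.card Y * Nat.card (PBR X Y × PBR Y Z) := by
  have hq : {q : PBR X Y × PBR Y Z // ∀ y, ¬ IsHub q a b y} ≃
      {g : EdgeSlot X Y Z → Prop //
        ∀ y, ∃ i, ¬ (g ∘ fun p : Y × Fin 4 => hubEdges a b p.1 p.2) (y, i)} :=
    pairEquiv.subtypeEquiv fun q => by simp only [IsHub, not_forall]; rfl
  have hcount := Nat.card_subtype_comp_mul_card (hubEdges_injective (Y := Y) a b)
    fun h => ∀ y, ∃ i, ¬ h (y, i)
  rw [Nat.card_forall_exists_not, Nat.card_fun, Nat.card_eq_fintype_card (α := Prop),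
    Fintype.card_prop, Nat.card_prod, Nat.card_eq_fintype_card (α := Fin 4), Fintype.card_fin,
    Nat.card_eq_fintype_card (α := Y), pow_mul'] at hcount
  rw [Nat.card_congr hq, Nat.card_congr pairEquiv]
  simpa using hcount

theorem comp_ne_univ_subset :
    {q : PBR X Y × PBR Y Z | comp q.2 q.1 ≠ Set.univ} ⊆
      ⋃ ab : (X ⊕ Z) × (X ⊕ Z), {q | ∀ y, ¬ IsHub q ab.1 ab.2 y} := by
  intro q hq
  obtain ⟨⟨a, b⟩, hab⟩ := (Set.ne_univ_iff_exists_notMem _).mp hq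
  exact Set.mem_iUnion.mpr ⟨(a, b), fun y hy => hab (mem_comp_of_isHub hy)⟩

theorem ncard_comp_ne_univ_mul_le [Fintype X] [Fintype Y] [Fintype Z] :
    {q : PBR X Y × PBR Y Z | comp q.2 q.1 ≠ Set.univ}.ncard * 16 ^ Fintype.card Y ≤
      Fintype.card (X ⊕ Z) ^ 2 * 15 ^ Fintype.card Y * Nat.card (PBR X Y × PBR Y Z) := by
  calc {q : PBR X Y × PBR Y Z | comp q.2 q.1 ≠ Set.univ}.ncard * 16 ^ Fintype.card Y
      ≤ (∑ ab : (X ⊕ Z) × (X ⊕ Z), {q | ∀ y, ¬ IsHub q ab.1 ab.2 y}.ncard) *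
          16 ^ Fintype.card Y := by
        gcongr
        exact (Set.ncard_le_ncard comp_ne_univ_subset).trans (Set.ncard_iUnion_le_of_fintype _)
    _ = ∑ _ab : (X ⊕ Z) × (X ⊕ Z), 15 ^ Fintype.card Y * Nat.card (PBR X Y × PBR Y Z) := by
        rw [Finset.sum_mul]
        exact Finset.sum_congr rfl fun ab _ => card_forall_not_isHub_mul ab.1 ab.2
    _ = _ := by simp [sq, mul_assoc]

theorem ncard_comp_ne_univ_div_le [Fintype X] [Fintype Y] [Fintype Z] :
    ({q : PBR X Y × PBR Y Z | comp q.2 q.1 ≠ Set.univ}.ncard : ℝ) /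
        Nat.card (PBR X Y × PBR Y Z) ≤
      Fintype.card (X ⊕ Z) ^ 2 * (15 / 16 : ℝ) ^ Fintype.card Y := by
  have hpos : (0 : ℝ) < Nat.card (PBR X Y × PBR Y Z) := by exact_mod_cast Nat.card_pos
  rw [div_le_iff₀ hpos, div_pow, mul_div_assoc', div_mul_eq_mul_div, le_div_iff₀ (by positivity)]
  exact_mod_cast ncard_comp_ne_univ_mul_le (X := X) (Y := Y) (Z := Z)

/-- Almost all pairs of PBRs on `(Fin n, Fin n)` compose to the full PBR:
the proportion of pairs `(α,β)` with `β∘α = ω̄_n` tends to `1` as `n → ∞`. -/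
theorem random_pbr_products_full :
    Filter.Tendsto (fun n : ℕ =>
      (Nat.card {q : PBR (Fin n) (Fin n) × PBR (Fin n) (Fin n) //
          comp q.2 q.1 = (Set.univ : PBR (Fin n) (Fin n))} : ℝ) /
        (Nat.card (PBR (Fin n) (Fin n)) : ℝ) ^ 2)
      Filter.atTop (nhds 1) := by
  have hbound (n : ℕ) :
      ({q : PBR (Fin n) (Fin n) × PBR (Fin n) (Fin n) | comp q.2 q.1 ≠ Set.univ}.ncard : ℝ) /
          Nat.card (PBR (Fin n) (Fin n) × PBR (Fin n) (Fin n)) ≤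
        4 * ((n : ℝ) ^ 2 * (15 / 16 : ℝ) ^ n) := by
    convert ncard_comp_ne_univ_div_le (X := Fin n) (Y := Fin n) (Z := Fin n) using 1
    simp only [Fintype.card_sum, Fintype.card_fin, Nat.cast_add]
    ring
  have hbad := squeeze_zero (fun n => by positivity) hbound <| by
    simpa using ((tendsto_pow_const_mul_const_pow_of_lt_one 2 (by norm_num) (by norm_num :
      (15 / 16 : ℝ) < 1)).const_mul 4)
  convert tendsto_const_nhds.sub hbad using 2 with n
  · rw [sq, ← Nat.cast_mul, ← Nat.card_prod, Nat.card_subtype_div_card_eq_one_sub]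
  · simp

end PBRPaper
end
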